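/- Let f : ℝ^d → ℝ be twice continuously differentiable with L₂-Lipschitz Hessian, Δₓ = f(x) − inf_z f(z) < ∞, and let H be symmetric with ‖H − ∇²f(x)‖ ≤ δ. With Π_large the projection onto eigenvectors of H with |eigenvalue| > ℓ and Π_small = I − Π_large, set y = x − (Π_large H Π_large)† ∇f(x). If ℓ ≥ max{24 Δₓ^{1/3} L₂^{2/3}, 2δ}, then ‖Π_large ∇f(y)‖ ≤ 2δ√(3Δₓ/ℓ) + 6L₂Δₓ/ℓ and ‖Π_small ∇f(y)‖ ≤ ‖Π_small ∇f(x)‖ + 2δ√(3Δₓ/ℓ) + 6L₂Δₓ/ℓ. -/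

import Mathlib

/-!
Write `g = ∇f(x)` and `u = y - x = -Σ_{|λⱼ|>ℓ} λⱼ⁻¹⟪hⱼ, g⟫ hⱼ`. The vector
`w = -Σ_{|λⱼ|>ℓ} |λⱼ|⁻¹⟪hⱼ, g⟫ hⱼ` has the same length as `u` and satisfies
`⟪g, w⟫ ≤ -ℓ‖w‖²` and `⟪g, w⟫ + ⟪w, H w⟫ ≤ 0`. By the cubic Taylor bound, if `‖u‖` exceeded
`2√(3Δₓ/ℓ)`, the step of that length along `w` would take `f` below its infimum; so
`‖u‖ ≤ 2√(3Δₓ/ℓ)`. Since `H u = -Π_large g`, the quadratic Taylor bound for the gradient gives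
`‖∇f(y) - Π_small g‖ ≤ (L₂/2)‖u‖² + δ‖u‖ ≤ 2δ√(3Δₓ/ℓ) + 6L₂Δₓ/ℓ`, and both estimates follow by
applying the orthogonal projections `Π_large` and `Π_small`.
-/

open scoped RealInnerProductSpace

section Taylor

variable {E F : Type*} [NormedAddCommGroup E] [NormedSpace ℝ E]
  [NormedAddCommGroup F] [NormedSpace ℝ F]

theorem norm_add_sub_sub_fderiv_le {G : E → F} (hG : Differentiable ℝ G) {L : ℝ}
    (hL : ∀ a b, ‖fderiv ℝ G a - fderiv ℝ G b‖ ≤ L * ‖a - b‖) (x u : E) :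
    ‖G (x + u) - G x - fderiv ℝ G x u‖ ≤ L / 2 * ‖u‖ ^ 2 := by
  have hderiv (t : ℝ) : HasDerivAt (fun s : ℝ => G (x + s • u) - G x - s • fderiv ℝ G x u)
      (fderiv ℝ G (x + t • u) u - fderiv ℝ G x u) t := by
    have hline : HasDerivAt (fun s : ℝ => x + s • u) u t := by
      simpa using ((hasDerivAt_id t).smul_const u).const_add x
    exact (((hG _).hasFDerivAt.comp_hasDerivAt t hline).sub_const _).sub
      (by simpa using (hasDerivAt_id t).smul_const (fderiv ℝ G x u))
  have hbound (t : ℝ) (ht : t ∈ Set.Ico (0 : ℝ) 1) :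
      ‖fderiv ℝ G (x + t • u) u - fderiv ℝ G x u‖ ≤ L * ‖u‖ ^ 2 * t := by
    calc ‖fderiv ℝ G (x + t • u) u - fderiv ℝ G x u‖
        = ‖(fderiv ℝ G (x + t • u) - fderiv ℝ G x) u‖ := rfl
      _ ≤ ‖fderiv ℝ G (x + t • u) - fderiv ℝ G x‖ * ‖u‖ := ContinuousLinearMap.le_opNorm _ _
      _ ≤ L * ‖x + t • u - x‖ * ‖u‖ := by gcongr; exact hL _ _
      _ = L * ‖u‖ ^ 2 * t := by
        rw [add_sub_cancel_left, norm_smul, Real.norm_of_nonneg ht.1]; ring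
  have hB (t : ℝ) : HasDerivAt (fun s : ℝ => L / 2 * ‖u‖ ^ 2 * s ^ 2) (L * ‖u‖ ^ 2 * t) t :=
    ((hasDerivAt_pow 2 t).const_mul _).congr_deriv (by push_cast; ring)
  simpa using image_norm_le_of_norm_deriv_right_le_deriv_boundary
    (fun t _ => (hderiv t).continuousAt.continuousWithinAt)
    (fun t _ => (hderiv t).hasDerivWithinAt) (by simp) hB hbound
    (Set.right_mem_Icc.2 zero_le_one)

theorem norm_add_sub_sub_sub_fderiv_fderiv_le {f : E → F} (hf : Differentiable ℝ f)
    (hf' : Differentiable ℝ (fderiv ℝ f)) {L : ℝ}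
    (hL : ∀ a b, ‖fderiv ℝ (fderiv ℝ f) a - fderiv ℝ (fderiv ℝ f) b‖ ≤ L * ‖a - b‖) (x u : E) :
    ‖f (x + u) - f x - fderiv ℝ f x u - (2 : ℝ)⁻¹ • fderiv ℝ (fderiv ℝ f) x u u‖
      ≤ L / 6 * ‖u‖ ^ 3 := by
  set B := fderiv ℝ (fderiv ℝ f) x u u
  have hderiv (t : ℝ) : HasDerivAt
      (fun s : ℝ => f (x + s • u) - f x - s • fderiv ℝ f x u - (s ^ 2 / 2) • B)
      ((fderiv ℝ f (x + t • u) - fderiv ℝ f x - fderiv ℝ (fderiv ℝ f) x (t • u)) u) t := by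
    have hline : HasDerivAt (fun s : ℝ => x + s • u) u t := by
      simpa using ((hasDerivAt_id t).smul_const u).const_add x
    have hsq : HasDerivAt (fun s : ℝ => s ^ 2 / 2) t t :=
      ((hasDerivAt_pow 2 t).div_const 2).congr_deriv (by push_cast; ring)
    convert ((((hf _).hasFDerivAt.comp_hasDerivAt t hline).sub_const (f x)).sub
      ((hasDerivAt_id t).smul_const (fderiv ℝ f x u))).sub (hsq.smul_const B) using 1
    · rfl
    · simp [B]
  have hbound (t : ℝ) (ht : t ∈ Set.Ico (0 : ℝ) 1) :
      ‖(fderiv ℝ f (x + t • u) - fderiv ℝ f x - fderiv ℝ (fderiv ℝ f) x (t • u)) u‖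
        ≤ L / 2 * ‖u‖ ^ 3 * t ^ 2 := by
    calc _ ≤ ‖fderiv ℝ f (x + t • u) - fderiv ℝ f x - fderiv ℝ (fderiv ℝ f) x (t • u)‖ * ‖u‖ :=
          ContinuousLinearMap.le_opNorm _ _
      _ ≤ L / 2 * ‖t • u‖ ^ 2 * ‖u‖ := by
          gcongr; exact norm_add_sub_sub_fderiv_le hf' hL x (t • u)
      _ = L / 2 * ‖u‖ ^ 3 * t ^ 2 := by
          rw [norm_smul, Real.norm_of_nonneg ht.1]; ring
  have hB (t : ℝ) :
      HasDerivAt (fun s : ℝ => L / 6 * ‖u‖ ^ 3 * s ^ 3) (L / 2 * ‖u‖ ^ 3 * t ^ 2) t :=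
    ((hasDerivAt_pow 3 t).const_mul _).congr_deriv (by push_cast; ring)
  simpa [div_eq_inv_mul] using image_norm_le_of_norm_deriv_right_le_deriv_boundary
    (fun t _ => (hderiv t).continuousAt.continuousWithinAt)
    (fun t _ => (hderiv t).hasDerivWithinAt) (by simp) hB hbound
    (Set.right_mem_Icc.2 zero_le_one)

end Taylor

section Spectral

variable {ι E : Type*} [NormedAddCommGroup E] [InnerProductSpace ℝ E] {h : ι → E}

theorem Orthonormal.inner_sum_smul [DecidableEq ι] (hon : Orthonormal ℝ h) (S : Finset ι)
    (a : ι → ℝ) (i : ι) : ⟪h i, ∑ j ∈ S, a j • h j⟫ = if i ∈ S then a i else 0 := by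
  split_ifs with hi
  · exact hon.inner_right_sum a hi
  · rw [inner_sum]
    exact Finset.sum_eq_zero fun j hj => by
      rw [real_inner_smul_right, hon.inner_eq_zero (ne_of_mem_of_not_mem hj hi).symm, mul_zero]

theorem Orthonormal.norm_sum_smul_sq (hon : Orthonormal ℝ h) (S : Finset ι) (a : ι → ℝ) :
    ‖∑ j ∈ S, a j • h j‖ ^ 2 = ∑ j ∈ S, a j ^ 2 := by
  rw [← real_inner_self_eq_norm_sq, hon.inner_sum]
  simp [sq]

theorem Orthonormal.starProjection_span_image_eq_sum [DecidableEq E] (hon : Orthonormal ℝ h)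
    (S : Finset ι) (v : E) :
    (Submodule.span ℝ (S.image h : Set E)).starProjection v = ∑ j ∈ S, ⟪h j, v⟫ • h j := by
  refine Submodule.eq_starProjection_of_mem_of_inner_eq_zero
    (Submodule.sum_mem _ fun j hj => Submodule.smul_mem _ _
      (Submodule.subset_span (Finset.mem_coe.2 (Finset.mem_image_of_mem h hj)))) fun w hw => ?_
  refine Submodule.mem_orthogonal_singleton_iff_inner_right.1 (Submodule.span_le.2 ?_ hw)
  intro z hz
  obtain ⟨j, hj, rfl⟩ := Finset.mem_image.1 hz
  rw [SetLike.mem_coe, Submodule.mem_orthogonal_singleton_iff_inner_left, inner_sub_right,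
    hon.inner_right_sum _ hj, sub_self]

variable [Fintype ι]

/-- `⟪v, H w⟫` for `H = Σⱼ λⱼ hⱼhⱼᵀ`. -/
def spectralForm (lam : ι → ℝ) (h : ι → E) (v w : E) : ℝ :=
  ∑ j, lam j * ⟪h j, v⟫ * ⟪h j, w⟫

theorem spectralForm_sum_smul_left (hon : Orthonormal ℝ h) (lam : ι → ℝ) (S : Finset ι)
    (a : ι → ℝ) (w : E) :
    spectralForm lam h (∑ j ∈ S, a j • h j) w = ∑ j ∈ S, lam j * a j * ⟪h j, w⟫ := by
  classical
  simp only [spectralForm, hon.inner_sum_smul, mul_ite, ite_mul, mul_zero, zero_mul,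
    Finset.sum_ite_mem, Finset.univ_inter]

theorem spectralForm_neg_newton_step (hon : Orthonormal ℝ h) {lam : ι → ℝ} {S : Finset ι}
    (hS : ∀ j ∈ S, lam j ≠ 0) (g w : E) :
    spectralForm lam h (-∑ j ∈ S, ((lam j)⁻¹ * ⟪h j, g⟫) • h j) w
      = -⟪∑ j ∈ S, ⟪h j, g⟫ • h j, w⟫ := by
  simp only [← Finset.sum_neg_distrib, ← neg_smul, spectralForm_sum_smul_left hon, sum_inner,
    real_inner_smul_left]
  exact Finset.sum_congr rfl fun j hj => by field_simp [hS j hj]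

theorem exists_descent_direction (hon : Orthonormal ℝ h) {lam : ι → ℝ} {ℓ : ℝ} (hℓ : 0 ≤ ℓ)
    {S : Finset ι} (hS : ∀ j ∈ S, ℓ < |lam j|) (g : E) :
    ∃ w : E, ‖w‖ = ‖∑ j ∈ S, ((lam j)⁻¹ * ⟪h j, g⟫) • h j‖ ∧
      ⟪g, w⟫ ≤ -(ℓ * ‖w‖ ^ 2) ∧ ⟪g, w⟫ + spectralForm lam h w w ≤ 0 := by
  set w := ∑ j ∈ S, (-(⟪h j, g⟫ / |lam j|)) • h j
  have hpos (j : ι) (hj : j ∈ S) : 0 < |lam j| := hℓ.trans_lt (hS j hj)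
  have hgw : ⟪g, w⟫ = ∑ j ∈ S, -(⟪h j, g⟫ ^ 2 / |lam j|) := by
    simp only [w, inner_sum, real_inner_smul_right]
    exact Finset.sum_congr rfl fun j _ => by rw [real_inner_comm]; ring
  have hww : ‖w‖ ^ 2 = ∑ j ∈ S, ⟪h j, g⟫ ^ 2 / |lam j| ^ 2 := by
    simp only [w, hon.norm_sum_smul_sq, neg_sq, div_pow]
  have hHww : spectralForm lam h w w = ∑ j ∈ S, lam j * ⟪h j, g⟫ ^ 2 / |lam j| ^ 2 := by
    simp only [w, spectralForm_sum_smul_left hon]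
    refine Finset.sum_congr rfl fun j hj => ?_
    rw [hon.inner_right_sum _ hj]; ring
  refine ⟨w, ?_, ?_, ?_⟩
  · rw [← sq_eq_sq₀ (norm_nonneg _) (norm_nonneg _), hww, hon.norm_sum_smul_sq]
    exact Finset.sum_congr rfl fun j _ => by rw [sq_abs]; ring
  · rw [hgw, hww, Finset.mul_sum, ← Finset.sum_neg_distrib]
    refine Finset.sum_le_sum fun j hj => neg_le_neg ?_
    have hlam := hpos j hj
    rw [mul_div_assoc', div_le_div_iff₀ (by positivity) hlam]
    nlinarith [mul_nonneg (mul_nonneg (sq_nonneg ⟪h j, g⟫) hlam.le) (sub_nonneg.2 (hS j hj).le)]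
  · rw [hgw, hHww, ← Finset.sum_add_distrib]
    refine Finset.sum_nonpos fun j hj => ?_
    have hlam := hpos j hj
    rw [neg_add_eq_sub, sub_nonpos, div_le_div_iff₀ (by positivity) hlam]
    nlinarith [mul_nonneg (mul_nonneg (sq_nonneg ⟪h j, g⟫) hlam.le)
      (sub_nonneg.2 (le_abs_self (lam j)))]

end Spectral

theorem Submodule.norm_starProjection_le_and_norm_sub_starProjection_le {E : Type*}
    [NormedAddCommGroup E] [InnerProductSpace ℝ E] (K : Submodule ℝ E)
    [K.HasOrthogonalProjection] {a b : E} {ε : ℝ} (hab : ‖b - (a - K.starProjection a)‖ ≤ ε) :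
    ‖K.starProjection b‖ ≤ ε ∧ ‖b - K.starProjection b‖ ≤ ‖a - K.starProjection a‖ + ε := by
  set e := b - (a - K.starProjection a)
  have hPb : K.starProjection b = K.starProjection e := by
    rw [map_sub, K.starProjection_apply_eq_zero_iff.2 (K.sub_starProjection_mem_orthogonal a),
      sub_zero]
  refine ⟨hPb ▸ (K.norm_starProjection_apply_le e).trans hab, ?_⟩
  have hdecomp : b - K.starProjection b = (a - K.starProjection a) + Kᗮ.starProjection e := by
    rw [starProjection_orthogonal_val, ← hPb]
    simp only [e]
    abel
  rw [hdecomp]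
  exact (norm_add_le _ _).trans (add_le_add_right ((Kᗮ.norm_starProjection_apply_le e).trans hab) _)

theorem mul_sq_le_pow_three_of_rpow_le {Δ L ℓ : ℝ} (hΔ : 0 ≤ Δ) (hL : 0 ≤ L)
    (h : 24 * Δ ^ ((1 : ℝ) / 3) * L ^ ((2 : ℝ) / 3) ≤ ℓ) : 13824 * Δ * L ^ 2 ≤ ℓ ^ 3 := by
  have hΔ3 : (Δ ^ ((1 : ℝ) / 3)) ^ 3 = Δ := by
    rw [← Real.rpow_natCast, ← Real.rpow_mul hΔ]; norm_num
  have hL3 : (L ^ ((2 : ℝ) / 3)) ^ 3 = L ^ 2 := by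
    rw [← Real.rpow_natCast, ← Real.rpow_mul hL]; norm_num
  calc 13824 * Δ * L ^ 2 = (24 * Δ ^ ((1 : ℝ) / 3) * L ^ ((2 : ℝ) / 3)) ^ 3 := by
        rw [mul_pow, mul_pow, hΔ3, hL3]; norm_num
    _ ≤ ℓ ^ 3 := pow_le_pow_left₀ (by positivity) h 3

theorem le_two_mul_sqrt_of_forall_cubic_model {Δ L δ ℓ N a b : ℝ} (hΔ : 0 < Δ) (hℓ : 0 < ℓ)
    (hδℓ : 2 * δ ≤ ℓ) (hℓ3 : 12 * Δ * L ^ 2 ≤ ℓ ^ 3) (ha : a ≤ -(ℓ * N ^ 2))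
    (hab : a + b ≤ δ * N ^ 2)
    (hmodel : ∀ t ∈ Set.Icc (0 : ℝ) 1, -Δ ≤ t * a + t ^ 2 / 2 * b + L / 6 * (t * N) ^ 3) :
    N ≤ 2 * √(3 * Δ / ℓ) := by
  set r := √(3 * Δ / ℓ)
  have hr : 0 < r := Real.sqrt_pos.2 (by positivity)
  have hr2 : ℓ * r ^ 2 = 3 * Δ := by
    rw [Real.sq_sqrt (by positivity)]; field_simp
  by_contra! hN
  have hNpos : 0 < N := by linarith
  set t := 2 * r / N
  have ht0 : 0 ≤ t := by positivity
  have ht1 : t ≤ 1 := (div_le_one hNpos).2 hN.le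
  have htN : t * N = 2 * r := div_mul_cancel₀ _ hNpos.ne'
  have hquad : t * a + t ^ 2 / 2 * b < -(3 * Δ) := by
    have h1 : t ^ 2 / 2 * b ≤ t ^ 2 / 2 * (δ * N ^ 2 - a) :=
      mul_le_mul_of_nonneg_left (by linarith) (by positivity)
    have h2 : t * (1 - t / 2) * a ≤ t * (1 - t / 2) * -(ℓ * N ^ 2) :=
      mul_le_mul_of_nonneg_left ha (mul_nonneg ht0 (by linarith))
    have h3 : ℓ * (2 * r) * (2 * r) < ℓ * (2 * r) * N := by
      have : 0 < ℓ * (2 * r) := by positivity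
      nlinarith
    have h4 : δ * (2 * r) ^ 2 ≤ ℓ / 2 * (2 * r) ^ 2 := by nlinarith
    have : t * a + t ^ 2 / 2 * b
        ≤ -(ℓ * (2 * r) * N) + ℓ * (2 * r) ^ 2 / 2 + δ * (2 * r) ^ 2 / 2 := by
      rw [← htN]; nlinarith
    nlinarith
  have hcubic : 3 * Δ < 2 * L * r ^ 3 := by
    have := hmodel t ⟨ht0, ht1⟩
    rw [htN] at this
    nlinarith
  have hsq : 9 * Δ ^ 2 * ℓ ^ 3 < 108 * L ^ 2 * Δ ^ 3 :=
    calc 9 * Δ ^ 2 * ℓ ^ 3 = (3 * Δ) ^ 2 * ℓ ^ 3 := by ring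
      _ < (2 * L * r ^ 3) ^ 2 * ℓ ^ 3 :=
        mul_lt_mul_of_pos_right (pow_lt_pow_left₀ hcubic (by positivity) two_ne_zero)
          (pow_pos hℓ 3)
      _ = 4 * L ^ 2 * (ℓ * r ^ 2) ^ 3 := by ring
      _ = 108 * L ^ 2 * Δ ^ 3 := by rw [hr2]; ring
  nlinarith [mul_le_mul_of_nonneg_left hℓ3 (by positivity : (0 : ℝ) ≤ 9 * Δ ^ 2)]

theorem norm_le_two_mul_sqrt_of_descent_direction {E : Type*} [NormedAddCommGroup E]
    [NormedSpace ℝ E] {f : E → ℝ} (hf : Differentiable ℝ f)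
    (hf' : Differentiable ℝ (fderiv ℝ f)) {L δ ℓ Δ : ℝ}
    (hLip : ∀ a b, ‖fderiv ℝ (fderiv ℝ f) a - fderiv ℝ (fderiv ℝ f) b‖ ≤ L * ‖a - b‖)
    (hℓ : 0 < ℓ) (hδℓ : 2 * δ ≤ ℓ) (hℓ3 : 12 * Δ * L ^ 2 ≤ ℓ ^ 3) {x w : E}
    (hΔ : ∀ z, f x - f z ≤ Δ) (hgw : fderiv ℝ f x w ≤ -(ℓ * ‖w‖ ^ 2))
    (hgH : fderiv ℝ f x w + fderiv ℝ (fderiv ℝ f) x w w ≤ δ * ‖w‖ ^ 2) :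
    ‖w‖ ≤ 2 * √(3 * Δ / ℓ) := by
  rcases le_or_gt Δ 0 with hΔ0 | hΔ0
  · have hmin : IsLocalMin f x := Filter.Eventually.of_forall fun z => by linarith [hΔ z]
    rw [hmin.fderiv_eq_zero, zero_apply] at hgw
    have hw2 : ‖w‖ ^ 2 ≤ 0 := by nlinarith
    have hw : ‖w‖ ≤ 0 := by nlinarith [norm_nonneg w]
    exact hw.trans (by positivity)
  refine le_two_mul_sqrt_of_forall_cubic_model hΔ0 hℓ hδℓ hℓ3 hgw hgH fun t ht => ?_
  have htaylor := norm_add_sub_sub_sub_fderiv_fderiv_le hf hf' hLip x (t • w)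
  simp only [map_smul, smul_apply, smul_eq_mul, norm_smul, Real.norm_of_nonneg ht.1,
    Real.norm_eq_abs] at htaylor
  linarith [(abs_le.1 htaylor).2, hΔ (x + t • w)]

section NewtonStep

variable {ι E : Type*} [Fintype ι] [NormedAddCommGroup E] [InnerProductSpace ℝ E]
  [CompleteSpace E] {f : E → ℝ} {L δ : ℝ} {lam : ι → ℝ} {h : ι → E} {S : Finset ι} {x : E}

theorem norm_gradient_add_sub_le (hf' : Differentiable ℝ (fderiv ℝ f)) (hL : 0 ≤ L) (hδ : 0 ≤ δ)
    (hLip : ∀ a b, ‖fderiv ℝ (fderiv ℝ f) a - fderiv ℝ (fderiv ℝ f) b‖ ≤ L * ‖a - b‖) {u p : E}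
    (hp : ∀ v, |⟪p, v⟫ - fderiv ℝ (fderiv ℝ f) x u v| ≤ δ * ‖u‖ * ‖v‖) :
    ‖gradient f (x + u) - (gradient f x + p)‖ ≤ L / 2 * ‖u‖ ^ 2 + δ * ‖u‖ := by
  rw [← (InnerProductSpace.toDual ℝ E).norm_map]
  refine ContinuousLinearMap.opNorm_le_bound _ (by positivity) fun v => ?_
  set R := fderiv ℝ f (x + u) - fderiv ℝ f x - fderiv ℝ (fderiv ℝ f) x u
  have hsplit : InnerProductSpace.toDual ℝ E (gradient f (x + u) - (gradient f x + p)) v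
      = R v - (⟪p, v⟫ - fderiv ℝ (fderiv ℝ f) x u v) := by
    simp only [InnerProductSpace.toDual_apply_apply, inner_sub_left, inner_add_left,
      inner_gradient_left, R, sub_apply]
    ring
  rw [hsplit, Real.norm_eq_abs]
  calc |R v - (⟪p, v⟫ - fderiv ℝ (fderiv ℝ f) x u v)|
      ≤ ‖R v‖ + |⟪p, v⟫ - fderiv ℝ (fderiv ℝ f) x u v| := abs_sub _ _
    _ ≤ L / 2 * ‖u‖ ^ 2 * ‖v‖ + δ * ‖u‖ * ‖v‖ :=
      add_le_add ((R.le_opNorm v).trans (mul_le_mul_of_nonneg_right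
        (norm_add_sub_sub_fderiv_le hf' hLip x u) (norm_nonneg v))) (hp v)
    _ = (L / 2 * ‖u‖ ^ 2 + δ * ‖u‖) * ‖v‖ := by ring

theorem norm_gradient_newton_step_sub_le [DecidableEq E] (hf' : Differentiable ℝ (fderiv ℝ f))
    (hL : 0 ≤ L) (hδ : 0 ≤ δ)
    (hLip : ∀ a b, ‖fderiv ℝ (fderiv ℝ f) a - fderiv ℝ (fderiv ℝ f) b‖ ≤ L * ‖a - b‖)
    (hon : Orthonormal ℝ h) (hS : ∀ j ∈ S, lam j ≠ 0)
    (hH : ∀ v w, |spectralForm lam h v w - fderiv ℝ (fderiv ℝ f) x v w| ≤ δ * ‖v‖ * ‖w‖) :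
    ‖gradient f (x - ∑ j ∈ S, ((lam j)⁻¹ * ⟪h j, gradient f x⟫) • h j)
        - (gradient f x - (Submodule.span ℝ (S.image h : Set E)).starProjection (gradient f x))‖
      ≤ L / 2 * ‖∑ j ∈ S, ((lam j)⁻¹ * ⟪h j, gradient f x⟫) • h j‖ ^ 2
        + δ * ‖∑ j ∈ S, ((lam j)⁻¹ * ⟪h j, gradient f x⟫) • h j‖ := by
  rw [sub_eq_add_neg x, sub_eq_add_neg (gradient f x), ← norm_neg (∑ j ∈ S, _)]
  refine norm_gradient_add_sub_le hf' hL hδ hLip fun v => ?_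
  rw [inner_neg_left, hon.starProjection_span_image_eq_sum, ← spectralForm_neg_newton_step hon hS]
  exact hH _ v

theorem norm_newton_step_le (hf : Differentiable ℝ f) (hf' : Differentiable ℝ (fderiv ℝ f))
    {ℓ Δ : ℝ} (hLip : ∀ a b, ‖fderiv ℝ (fderiv ℝ f) a - fderiv ℝ (fderiv ℝ f) b‖ ≤ L * ‖a - b‖)
    (hon : Orthonormal ℝ h) (hℓ : 0 < ℓ) (hδℓ : 2 * δ ≤ ℓ) (hℓ3 : 12 * Δ * L ^ 2 ≤ ℓ ^ 3)
    (hS : ∀ j ∈ S, ℓ < |lam j|) (hΔ : ∀ z, f x - f z ≤ Δ)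
    (hH : ∀ v w, |spectralForm lam h v w - fderiv ℝ (fderiv ℝ f) x v w| ≤ δ * ‖v‖ * ‖w‖) :
    ‖∑ j ∈ S, ((lam j)⁻¹ * ⟪h j, gradient f x⟫) • h j‖ ≤ 2 * √(3 * Δ / ℓ) := by
  obtain ⟨w, hwn, hgw, hgH⟩ := exists_descent_direction hon hℓ.le hS (gradient f x)
  rw [← hwn]
  refine norm_le_two_mul_sqrt_of_descent_direction hf hf' hLip hℓ hδℓ hℓ3 hΔ ?_ ?_ <;>
    rw [← inner_gradient_left]
  · exact hgw
  · linarith [(abs_le.1 (hH w w)).1]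

end NewtonStep

/-- Lemma 'large-eigenspace-Newton-step': after the restricted Newton step
`y = x − (Π_large H Π_large)† ∇f(x)` (with `H = Σ λⱼ hⱼhⱼᵀ` `δ`-close to `∇²f(x)` and
`Π_large` the projection onto eigenvectors with `|λⱼ| > ℓ`, so that
`(Π_large H Π_large)†∇f(x) = Σ_{|λⱼ|>ℓ} λⱼ⁻¹⟪hⱼ, ∇f(x)⟫hⱼ`), if
`ℓ ≥ max{24Δₓ^{1/3}L₂^{2/3}, 2δ}` then
`‖Π_large ∇f(y)‖ ≤ 2δ√(3Δₓ/ℓ) + 6L₂Δₓ/ℓ` and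
`‖Π_small ∇f(y)‖ ≤ ‖Π_small ∇f(x)‖ + 2δ√(3Δₓ/ℓ) + 6L₂Δₓ/ℓ`. -/
theorem stmt17 (d : ℕ) (f : EuclideanSpace ℝ (Fin d) → ℝ) (L₂ δ ℓ Δx : ℝ)
    (hL₂ : 0 < L₂) (hδ : 0 ≤ δ) (hℓpos : 0 < ℓ)
    (hf : ContDiff ℝ 2 f)
    (hLip : ∀ x y : EuclideanSpace ℝ (Fin d),
      ‖fderiv ℝ (fderiv ℝ f) x - fderiv ℝ (fderiv ℝ f) y‖ ≤ L₂ * ‖x - y‖)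
    (x : EuclideanSpace ℝ (Fin d))
    (hbdd : BddBelow (Set.range f))
    (hΔx : Δx = f x - ⨅ z, f z)
    (lam : Fin d → ℝ) (h : Fin d → EuclideanSpace ℝ (Fin d)) (hon : Orthonormal ℝ h)
    (hH : ∀ v w : EuclideanSpace ℝ (Fin d),
      |(∑ j, lam j * ⟪h j, v⟫ * ⟪h j, w⟫) - fderiv ℝ (fderiv ℝ f) x v w|
        ≤ δ * ‖v‖ * ‖w‖)
    (hℓ : max (24 * Δx ^ ((1:ℝ)/3) * L₂ ^ ((2:ℝ)/3)) (2 * δ) ≤ ℓ)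
    (Plarge : EuclideanSpace ℝ (Fin d) → EuclideanSpace ℝ (Fin d))
    (hPlarge : ∀ v, Plarge v
      = ∑ j ∈ Finset.univ.filter (fun j => ℓ < |lam j|), ⟪h j, v⟫ • h j)
    (y : EuclideanSpace ℝ (Fin d))
    (hy : y = x - ∑ j ∈ Finset.univ.filter (fun j => ℓ < |lam j|),
        ((lam j)⁻¹ * ⟪h j, gradient f x⟫) • h j) :
    ‖Plarge (gradient f y)‖ ≤ 2 * δ * Real.sqrt (3 * Δx / ℓ) + 6 * L₂ * Δx / ℓ ∧
    ‖gradient f y - Plarge (gradient f y)‖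
      ≤ ‖gradient f x - Plarge (gradient f x)‖
        + 2 * δ * Real.sqrt (3 * Δx / ℓ) + 6 * L₂ * Δx / ℓ := by
  classical
  set S := Finset.univ.filter (fun j => ℓ < |lam j|)
  set K := Submodule.span ℝ (S.image h : Set (EuclideanSpace ℝ (Fin d)))
  have hS : ∀ j ∈ S, ℓ < |lam j| := fun j hj => (Finset.mem_filter.1 hj).2
  have hf1 : Differentiable ℝ f := hf.differentiable (by norm_num)
  have hf2 : Differentiable ℝ (fderiv ℝ f) :=
    (hf.fderiv_right (m := 1) (by norm_num)).differentiable (by norm_num)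
  have hΔ (z) : f x - f z ≤ Δx := by rw [hΔx]; linarith [ciInf_le hbdd z]
  have hΔ0 : 0 ≤ Δx := by simpa using hΔ x
  have hℓ3 : 12 * Δx * L₂ ^ 2 ≤ ℓ ^ 3 := by
    have := mul_sq_le_pow_three_of_rpow_le hΔ0 hL₂.le (le_of_max_le_left hℓ)
    nlinarith [mul_nonneg hΔ0 (sq_nonneg L₂)]
  have hstep := norm_newton_step_le hf1 hf2 hLip hon hℓpos (le_of_max_le_right hℓ) hℓ3 hS hΔ hH
  have hres : ‖gradient f y - (gradient f x - K.starProjection (gradient f x))‖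
      ≤ 2 * δ * √(3 * Δx / ℓ) + 6 * L₂ * Δx / ℓ := by
    have hr2 : √(3 * Δx / ℓ) ^ 2 = 3 * Δx / ℓ := Real.sq_sqrt (by positivity)
    rw [hy]
    refine (norm_gradient_newton_step_sub_le hf2 hL₂.le hδ hLip hon
      (fun j hj => abs_pos.1 (hℓpos.trans (hS j hj))) hH).trans ?_
    calc _ ≤ L₂ / 2 * (2 * √(3 * Δx / ℓ)) ^ 2 + δ * (2 * √(3 * Δx / ℓ)) := by gcongr
      _ = 2 * δ * √(3 * Δx / ℓ) + 6 * L₂ * Δx / ℓ := by rw [mul_pow, hr2]; field_simp; ring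
  have hP (v) : Plarge v = K.starProjection v := by
    rw [hPlarge, hon.starProjection_span_image_eq_sum]
  simp only [hP]
  obtain ⟨hlarge, hsmall⟩ := K.norm_starProjection_le_and_norm_sub_starProjection_le hres
  exact ⟨hlarge, by linarith⟩
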